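/- Let β ∈ ℝ and let u : ℝ → ℝ be four times continuously differentiable with u''''(x) + β² u''(x) + u(x)³ + 3u(x)² + 2u(x) = 0 for all x ∈ ℝ, with u(x), u′(x), u″(x), u‴(x) all tending to 0 as x → −∞, and with u(x) > −2 for all x ∈ ℝ. Let c ≤ −1 and a < b satisfy u(a) = u(b) = c and u(x) ≤ c for all x ∈ [a, b]. Then (1/2)∫_{a}^{b} (u″)² dx − (β²/2)∫_{a}^{b} (u′)² dx + (1/4)∫_{a}^{b} u(x)² (u(x) + 2)² dx ≥ 0. -/

import Mathlib

open MeasureTheory Real Filter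

/-!
Multiplying the equation by `u'` shows that the Hamiltonian
`H = u'''u' - ½(u'')² + (β²/2)(u')² + ¼u²(u+2)²` is constant, hence `H ≡ 0` by the decay
at `-∞`.
Using `H = 0` and the equation, the energy density differs from
`(u'')² - (u³ + 3u² + 2u)(u - c)` by the derivative of `(u''' + β²u')(u - c)`, which
vanishes at `a` and `b` because `u(a) = u(b) = c`. On `[a, b]` we have `-2 < u ≤ c ≤ -1`, so
`(u³ + 3u² + 2u)(u - c) = u(u+1)(u+2)(u - c) ≤ 0` and the integrand is nonnegative.
-/

theorem ContDiff.hasDerivAt_iteratedDeriv {𝕜 F : Type*} [NontriviallyNormedField 𝕜]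
    [NormedAddCommGroup F] [NormedSpace 𝕜 F] {n : WithTop ℕ∞} {f : 𝕜 → F}
    (hf : ContDiff 𝕜 n f)
    {m : ℕ} (hm : (m : WithTop ℕ∞) < n) (x : 𝕜) :
    HasDerivAt (iteratedDeriv m f) (iteratedDeriv (m + 1) f x) x := by
  rw [iteratedDeriv_succ]
  exact (hf.differentiable_iteratedDeriv m hm x).hasDerivAt

theorem eq_of_hasDerivAt_zero_of_tendsto_atBot {F : Type*} [NormedAddCommGroup F]
    [NormedSpace ℝ F] {f : ℝ → F} {L : F}
    (hf : ∀ x, HasDerivAt f 0 x) (hL : Tendsto f atBot (nhds L)) (x : ℝ) : f x = L := by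
  have hconst : f = fun _ => f x :=
    funext fun y => is_const_of_deriv_eq_zero (fun z => (hf z).differentiableAt)
      (fun z => (hf z).deriv) y x
  rw [hconst] at hL
  exact tendsto_nhds_unique tendsto_const_nhds hL

theorem cubic_mul_sub_nonpos {v c : ℝ} (hc : c ≤ -1) (hv : -2 < v) (hvc : v ≤ c) :
    (v ^ 3 + 3 * v ^ 2 + 2 * v) * (v - c) ≤ 0 := by
  rw [show v ^ 3 + 3 * v ^ 2 + 2 * v = v * (v + 1) * (v + 2) by ring]
  have hprod : 0 ≤ v * (v + 1) := mul_nonneg_of_nonpos_of_nonpos (by linarith) (by linarith)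
  exact mul_nonpos_of_nonneg_of_nonpos (mul_nonneg hprod (by linarith)) (by linarith)

namespace SwiftHohenberg

noncomputable def hamiltonian (β : ℝ) (u : ℝ → ℝ) (x : ℝ) : ℝ :=
  iteratedDeriv 3 u x * deriv u x - 1 / 2 * iteratedDeriv 2 u x ^ 2 + β ^ 2 / 2 * deriv u x ^ 2
    + 1 / 4 * (u x ^ 2 * (u x + 2) ^ 2)

noncomputable def energyDensity (β : ℝ) (u : ℝ → ℝ) (x : ℝ) : ℝ :=
  1 / 2 * iteratedDeriv 2 u x ^ 2 - β ^ 2 / 2 * deriv u x ^ 2 + 1 / 4 * (u x ^ 2 * (u x + 2) ^ 2)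

variable {β : ℝ} {u : ℝ → ℝ}

theorem hasDerivAt_derivatives (hu : ContDiff ℝ 4 u) (x : ℝ) :
    HasDerivAt u (deriv u x) x ∧ HasDerivAt (deriv u) (iteratedDeriv 2 u x) x ∧
      HasDerivAt (iteratedDeriv 2 u) (iteratedDeriv 3 u x) x ∧
      HasDerivAt (iteratedDeriv 3 u) (iteratedDeriv 4 u x) x := by
  have h0 := hu.hasDerivAt_iteratedDeriv (m := 0) (by norm_num) x
  have h1 := hu.hasDerivAt_iteratedDeriv (m := 1) (by norm_num) x
  rw [iteratedDeriv_zero, zero_add, iteratedDeriv_one] at h0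
  rw [iteratedDeriv_one] at h1
  exact ⟨h0, h1, hu.hasDerivAt_iteratedDeriv (by norm_num) x,
    hu.hasDerivAt_iteratedDeriv (by norm_num) x⟩

theorem hasDerivAt_hamiltonian (hu : ContDiff ℝ 4 u) {x : ℝ}
    (heq : iteratedDeriv 4 u x + β ^ 2 * iteratedDeriv 2 u x
      + u x ^ 3 + 3 * u x ^ 2 + 2 * u x = 0) :
    HasDerivAt (hamiltonian β u) 0 x := by
  obtain ⟨d0, d1, d2, d3⟩ := hasDerivAt_derivatives hu x
  have h := (((d3.mul d1).sub ((d2.pow 2).const_mul (1 / 2))).add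
    ((d1.pow 2).const_mul (β ^ 2 / 2))).add
    (((d0.pow 2).mul ((d0.add_const 2).pow 2)).const_mul (1 / 4))
  refine h.congr_deriv ?_
  simp only [Pi.pow_apply]
  push_cast
  linear_combination deriv u x * heq

theorem tendsto_hamiltonian_atBot (h0 : Tendsto u atBot (nhds 0))
    (h1 : Tendsto (deriv u) atBot (nhds 0)) (h2 : Tendsto (iteratedDeriv 2 u) atBot (nhds 0))
    (h3 : Tendsto (iteratedDeriv 3 u) atBot (nhds 0)) :
    Tendsto (hamiltonian β u) atBot (nhds 0) := by
  have h := (((h3.mul h1).sub ((h2.pow 2).const_mul (1 / 2))).add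
    ((h1.pow 2).const_mul (β ^ 2 / 2))).add
    (((h0.pow 2).mul ((h0.add_const 2).pow 2)).const_mul (1 / 4))
  norm_num at h
  exact h

theorem hasDerivAt_flux (hu : ContDiff ℝ 4 u) (c : ℝ) {x : ℝ}
    (heq : iteratedDeriv 4 u x + β ^ 2 * iteratedDeriv 2 u x
      + u x ^ 3 + 3 * u x ^ 2 + 2 * u x = 0) (hH : hamiltonian β u x = 0) :
    HasDerivAt (fun y => (iteratedDeriv 3 u y + β ^ 2 * deriv u y) * (u y - c))
      (iteratedDeriv 2 u x ^ 2 - (u x ^ 3 + 3 * u x ^ 2 + 2 * u x) * (u x - c)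
        - energyDensity β u x) x := by
  obtain ⟨d0, d1, -, d3⟩ := hasDerivAt_derivatives hu x
  refine ((d3.add (d1.const_mul (β ^ 2))).mul (d0.sub_const c)).congr_deriv ?_
  unfold hamiltonian at hH
  simp only [energyDensity, Pi.add_apply]
  linear_combination (u x - c) * heq + hH

theorem integral_energyDensity (hu : ContDiff ℝ 2 u) (a b : ℝ) :
    ∫ x in a..b, energyDensity β u x
      = 1 / 2 * (∫ x in a..b, iteratedDeriv 2 u x ^ 2)
        - β ^ 2 / 2 * (∫ x in a..b, deriv u x ^ 2)
        + 1 / 4 * (∫ x in a..b, u x ^ 2 * (u x + 2) ^ 2) := by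
  have c0 : Continuous u := hu.continuous
  have c1 : Continuous (deriv u) := hu.continuous_deriv (by norm_num)
  have c2 : Continuous (iteratedDeriv 2 u) := hu.continuous_iteratedDeriv 2 le_rfl
  unfold energyDensity
  rw [intervalIntegral.integral_add, intervalIntegral.integral_sub,
    intervalIntegral.integral_const_mul, intervalIntegral.integral_const_mul,
    intervalIntegral.integral_const_mul]
  all_goals apply Continuous.intervalIntegrable; fun_prop

theorem integral_energyDensity_eq_of_endpoints (hu : ContDiff ℝ 4 u)
    (heq : ∀ x : ℝ, iteratedDeriv 4 u x + β ^ 2 * iteratedDeriv 2 u x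
      + u x ^ 3 + 3 * u x ^ 2 + 2 * u x = 0) (hH : ∀ x, hamiltonian β u x = 0)
    {a b c : ℝ} (hua : u a = c) (hub : u b = c) :
    ∫ x in a..b, energyDensity β u x
      = ∫ x in a..b,
          (iteratedDeriv 2 u x ^ 2 - (u x ^ 3 + 3 * u x ^ 2 + 2 * u x) * (u x - c)) := by
  have c0 : Continuous u := hu.continuous
  have c1 : Continuous (deriv u) := hu.continuous_deriv (by norm_num)
  have c2 : Continuous (iteratedDeriv 2 u) := hu.continuous_iteratedDeriv 2 (by norm_num)
  have hL : Continuous (energyDensity β u) := by unfold energyDensity; fun_prop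
  have hflux := intervalIntegral.integral_eq_sub_of_hasDerivAt (a := a) (b := b)
    (fun x _ => hasDerivAt_flux hu c (heq x) (hH x))
    (by apply Continuous.intervalIntegrable; fun_prop)
  rw [intervalIntegral.integral_sub (by apply Continuous.intervalIntegrable; fun_prop)
    (hL.intervalIntegrable a b), hua, hub] at hflux
  linarith

end SwiftHohenberg

open SwiftHohenberg in
/-- Nonnegativity of the local energy on a trough: if `u'''' + β²u'' + u³ + 3u² + 2u = 0`
on `ℝ` with `u, u', u'', u''' → 0` at `-∞` and `u > -2` everywhere, and if `c ≤ -1`,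
`a < b`, `u(a) = u(b) = c` with `u ≤ c` on `[a, b]`, then
`(1/2)∫_a^b(u'')² - (β²/2)∫_a^b(u')² + (1/4)∫_a^b u²(u+2)² ≥ 0`. -/
theorem stmt19 (β : ℝ) (u : ℝ → ℝ) (hu : ContDiff ℝ 4 u)
    (heq : ∀ x : ℝ, iteratedDeriv 4 u x + β ^ 2 * iteratedDeriv 2 u x
        + (u x) ^ 3 + 3 * (u x) ^ 2 + 2 * u x = 0)
    (h0 : Tendsto u atBot (nhds 0))
    (h1 : Tendsto (deriv u) atBot (nhds 0))
    (h2 : Tendsto (iteratedDeriv 2 u) atBot (nhds 0))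
    (h3 : Tendsto (iteratedDeriv 3 u) atBot (nhds 0))
    (hgt : ∀ x : ℝ, -2 < u x)
    (c a b : ℝ) (hc : c ≤ -1) (hab : a < b)
    (hua : u a = c) (hub : u b = c)
    (hle : ∀ x ∈ Set.Icc a b, u x ≤ c) :
    (1 / 2) * (∫ x in a..b, (iteratedDeriv 2 u x) ^ 2)
      - (β ^ 2 / 2) * (∫ x in a..b, (deriv u x) ^ 2)
      + (1 / 4) * (∫ x in a..b, (u x) ^ 2 * (u x + 2) ^ 2) ≥ 0 := by
  have hH : ∀ x, hamiltonian β u x = 0 :=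
    eq_of_hasDerivAt_zero_of_tendsto_atBot (fun x => hasDerivAt_hamiltonian hu (heq x))
      (tendsto_hamiltonian_atBot h0 h1 h2 h3)
  rw [← integral_energyDensity (hu.of_le (by norm_num)),
    integral_energyDensity_eq_of_endpoints hu heq hH hua hub]
  exact intervalIntegral.integral_nonneg hab.le fun x hx =>
    sub_nonneg.mpr ((cubic_mul_sub_nonpos hc (hgt x) (hle x hx)).trans (sq_nonneg _))
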